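/- arXiv:2111.10232 — 4 statements merged into one kernel-verified Lean document; each statement's English description precedes it below -/
import Mathlib

section
/- For 2-by-2 matrices A_j = [[ã_j, b̃_j],[d̃_j, 0]], the (1,1) entries of successive products satisfy the determinant identity: A_{k,n}(11) A_{k+1,n+1}(11) − A_{k+1,n}(11) A_{k,n+1}(11) = −b̃_k d̃_{n+1} ∏_{j=k+1}^{n} det(A_j), where A_{k,n} := A_k A_{k+1} ⋯ A_n and A_{k,n}(ij) denotes its (i,j) entry. -/
/-! Writing `Q = A_{k+1,n}`, the four products are `A_k Q`, `Q A_{n+1}`, `Q` and `A_k Q A_{n+1}`.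
For arbitrary 2×2 matrices `A`, `Q`, `B` over a commutative ring,
`(AQ)₀₀ (QB)₀₀ − Q₀₀ (AQB)₀₀ = −A₀₁ B₁₀ det Q`: expanding, every term cancels except
`A₀₁ B₁₀ (Q₁₀ Q₀₁ − Q₀₀ Q₁₁)`. Multiplicativity of the determinant gives
`det Q = ∏_{j=k+1}^{n} det A_j`. -/

theorem Matrix.mul_zero_zero_mul_sub_mul_mul_zero_zero {R : Type*} [CommRing R]
    (A Q B : Matrix (Fin 2) (Fin 2) R) :
    (A * Q) 0 0 * (Q * B) 0 0 - Q 0 0 * (A * Q * B) 0 0 = -(A 0 1 * B 1 0) * Q.det := by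
  simp only [Matrix.mul_apply, Fin.sum_univ_two, Matrix.det_fin_two]
  ring

section RangeProd

variable {M : Type*} [Monoid M] (f : ℕ → M) {k n : ℕ}

theorem List.prod_map_range'_eq_mul_prod (h : k ≤ n) :
    ((List.range' k (n + 1 - k)).map f).prod =
      f k * ((List.range' (k + 1) (n + 1 - (k + 1))).map f).prod := by
  rw [show n + 1 - k = n + 1 - (k + 1) + 1 by omega, List.range'_succ, List.map_cons,
    List.prod_cons]

theorem List.prod_map_range'_eq_prod_mul (h : k ≤ n + 1) :
    ((List.range' k (n + 1 + 1 - k)).map f).prod =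
      ((List.range' k (n + 1 - k)).map f).prod * f (n + 1) := by
  rw [show n + 1 + 1 - k = n + 1 - k + 1 by omega, List.range'_concat, List.map_append,
    List.prod_append, List.map_singleton, List.prod_singleton, one_mul,
    show k + (n + 1 - k) = n + 1 by omega]

end RangeProd

theorem Finset.prod_Icc_eq_prod_map_range' {M : Type*} [CommMonoid M] (f : ℕ → M) (a b : ℕ) :
    ∏ j ∈ Finset.Icc a b, f j = ((List.range' a (b + 1 - a)).map f).prod := by
  rw [Nat.Icc_eq_range']
  rfl

theorem Matrix.det_list_prod {m R : Type*} [Fintype m] [DecidableEq m] [CommRing R]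
    (l : List (Matrix m m R)) : l.prod.det = (l.map Matrix.det).prod :=
  map_list_prod Matrix.detMonoidHom l

/-- Determinant identity for (1,1) entries of products of
`A j = [[ã j, b̃ j],[d̃ j, 0]]`:
`P k n (1,1) * P (k+1) (n+1) (1,1) − P (k+1) n (1,1) * P k (n+1) (1,1)
  = − b̃ k * d̃ (n+1) * ∏_{j=k+1}^{n} det (A j)`, where `P k n = A_k ⋯ A_n`. -/
theorem stmt6 (ta tb td : ℕ → ℝ)
    (A : ℕ → Matrix (Fin 2) (Fin 2) ℝ)
    (hA : ∀ j, A j = !![ta j, tb j; td j, 0])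
    (P : ℕ → ℕ → Matrix (Fin 2) (Fin 2) ℝ)
    (hP : ∀ k n, P k n = ((List.range' k (n + 1 - k)).map A).prod) :
    ∀ k n : ℕ, k ≤ n →
      P k n 0 0 * P (k+1) (n+1) 0 0 - P (k+1) n 0 0 * P k (n+1) 0 0 =
        -(tb k * td (n+1)) * ∏ j ∈ Finset.Icc (k+1) n, (A j).det := by
  intro k n hkn
  have hPk : P k n = A k * P (k + 1) n := by
    rw [hP, hP, List.prod_map_range'_eq_mul_prod A hkn]
  have hPn : ∀ i, i ≤ n + 1 → P i (n + 1) = P i n * A (n + 1) := fun i hi => by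
    rw [hP, hP, List.prod_map_range'_eq_prod_mul A hi]
  have hdet : (P (k + 1) n).det = ∏ j ∈ Finset.Icc (k + 1) n, (A j).det := by
    rw [hP, Matrix.det_list_prod, List.map_map, Finset.prod_Icc_eq_prod_map_range']
    rfl
  rw [hPn (k + 1) (by omega), hPn k (by omega), hPk,
    Matrix.mul_zero_zero_mul_sub_mul_mul_zero_zero, hdet, hA k, hA (n + 1)]
  simp
end

section
/- Suppose ã_k > 0, b̃_k > 0, d̃_k < 0 for all k in a range, so that det(A_k) = −b̃_k d̃_k > 0 and all (1,1) entries A_{k,n}(11) > 0. Then the ratios ξ_{k,n} = A_{k+1,n}(11)/A_{k,n}(11) are strictly monotone increasing in n: ξ_{k,n+1} > ξ_{k,n} for all n ≥ k. -/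
/-- If `ã j > 0`, `b̃ j > 0`, `d̃ j < 0` and all (1,1) entries of the
products `P k n = A_k ⋯ A_n` are positive, then the ratios
`ξ k n = P (k+1) n (1,1) / P k n (1,1)` are strictly increasing in `n`. -/
theorem stmt7 (ta tb td : ℕ → ℝ)
    (hta : ∀ j, 0 < ta j) (htb : ∀ j, 0 < tb j) (htd : ∀ j, td j < 0)
    (A : ℕ → Matrix (Fin 2) (Fin 2) ℝ)
    (hA : ∀ j, A j = !![ta j, tb j; td j, 0])
    (P : ℕ → ℕ → Matrix (Fin 2) (Fin 2) ℝ)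
    (hP : ∀ k n, P k n = ((List.range' k (n + 1 - k)).map A).prod)
    (hpos : ∀ k n, k ≤ n → 0 < P k n 0 0)
    (ξ : ℕ → ℕ → ℝ)
    (hξ : ∀ k n, ξ k n = P (k+1) n 0 0 / P k n 0 0) :
    ∀ k n : ℕ, k ≤ n → ξ k n < ξ k (n+1) := by
  have hdetA : ∀ j, 0 < (A j).det := by
    intro j
    rw [hA j, Matrix.det_fin_two_of]
    nlinarith [htb j, htd j]
  have hdet : ∀ m k, 0 < (((List.range' k m).map A).prod).det := by
    intro m
    induction m with
    | zero => intro k; simp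
    | succ m ih =>
      intro k
      rw [List.range'_succ, List.map_cons, List.prod_cons, Matrix.det_mul]
      exact mul_pos (hdetA k) (ih (k+1))
  intro k n hkn
  have hx : 0 < P k n 0 0 := hpos k n hkn
  have hx' : 0 < P k (n+1) 0 0 := hpos k (n+1) (by omega)
  have h1 : P k (n+1) = P k n * A (n+1) := by
    rw [hP, hP]
    have e : n + 1 + 1 - k = (n + 1 - k) + 1 := by omega
    have e2 : k + 1 * (n + 1 - k) = n + 1 := by omega
    rw [e, List.range'_concat, List.map_append, List.prod_append, e2]
    simp
  have h2 : P (k+1) (n+1) = P (k+1) n * A (n+1) := by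
    rw [hP, hP]
    have e : n + 1 + 1 - (k+1) = (n + 1 - (k+1)) + 1 := by omega
    have e2 : k + 1 + 1 * (n + 1 - (k+1)) = n + 1 := by omega
    rw [e, List.range'_concat, List.map_append, List.prod_append, e2]
    simp
  have h3 : P k n = A k * P (k+1) n := by
    rw [hP, hP]
    have e : n + 1 - k = (n + 1 - (k+1)) + 1 := by omega
    rw [e, List.range'_succ, List.map_cons, List.prod_cons]
  set Q := P (k+1) n with hQ
  have hdQ : 0 < Q.det := by rw [hQ, hP]; exact hdet _ _
  have hdQ' : 0 < Q 0 0 * Q 1 1 - Q 0 1 * Q 1 0 := by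
    rw [Matrix.det_fin_two] at hdQ; linarith
  have ex : P k n 0 0 = ta k * Q 0 0 + tb k * Q 1 0 := by
    rw [h3, hA k]; simp [Matrix.mul_apply, Fin.sum_univ_two]
  have exq : P k n 0 1 = ta k * Q 0 1 + tb k * Q 1 1 := by
    rw [h3, hA k]; simp [Matrix.mul_apply, Fin.sum_univ_two]
  have ex' : P k (n+1) 0 0 = P k n 0 0 * ta (n+1) + P k n 0 1 * td (n+1) := by
    rw [h1, hA (n+1)]; simp [Matrix.mul_apply, Fin.sum_univ_two]
  have ey' : P (k+1) (n+1) 0 0 = Q 0 0 * ta (n+1) + Q 0 1 * td (n+1) := by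
    rw [h2, hA (n+1)]; simp [Matrix.mul_apply, Fin.sum_univ_two]
  rw [hξ, hξ]
  rw [div_lt_div_iff₀ hx hx']
  rw [ey', ex', exq, ex]
  nlinarith [mul_pos (mul_pos (neg_pos.mpr (htd (n+1))) (htb k)) hdQ', hx, hx']
end

section
/- Let β_k → β > 0 and α_k → α > 0 be positive sequences, with approximants ξ_{k,n} and tails ξ_k of the associated continued fractions (all positive). Then there exist 0 < r < 1 and k₂ such that for all n > k ≥ k₂: if n − k + 1 is even then (ξ_{k,n} − ξ_k)/(ξ_{k+1} − ξ_{k+1,n}) < r, and if n − k + 1 is odd then (ξ_{k,n} − ξ_k)/(ξ_{k+2,n} − ξ_{k+2}) < r². -/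
/-!
Writing `ρ k n = ξ k n * ξt k / β k`, the recursions give the exact error relation
`ξ k n - ξt k = ρ k n * (ξt (k+1) - ξ (k+1) n)`, so the error alternates in sign and shrinks by
the factor `ρ k n`. When `ξ k n < ξt k` this factor is below `ξt k ^ 2 / β k`; two consecutive
factors are below `(ξt k ^ 2 / β k) * (ξt (k+1) ^ 2 / β (k+1))` because `x ↦ β x / (α + x)` is
increasing. Finally `ξt k ^ 2 / β k → L ^ 2 / β' < 1`, since the limit `L` of the tails solves
`L (α' + L) = β'`.
-/

open Filter Topology

theorem div_add_sub_div_add {a b x y : ℝ} (hb : b ≠ 0) (hx : a + x ≠ 0) (hy : a + y ≠ 0) :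
    b / (a + x) - b / (a + y) = b / (a + x) * (b / (a + y)) / b * (y - x) := by
  field_simp
  ring

theorem div_add_mul_self_lt_div_add_mul_self {a b x y : ℝ} (ha : 0 < a) (hb : 0 < b)
    (hx : 0 ≤ x) (hxy : x < y) : b / (a + x) * x < b / (a + y) * y := by
  rw [div_mul_eq_mul_div, div_mul_eq_mul_div, div_lt_div_iff₀ (by positivity) (by linarith)]
  nlinarith [mul_pos (mul_pos hb ha) (sub_pos.2 hxy)]

section ContinuedFraction

variable {α β : ℕ → ℝ} {ξ : ℕ → ℕ → ℝ} {ξt : ℕ → ℝ}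

theorem approx_pos (hαpos : ∀ k, 0 < α k) (hβpos : ∀ k, 0 < β k)
    (hdiag : ∀ n, ξ n n = β n / α n) (hrec : ∀ k n, k < n → ξ k n = β k / (α k + ξ (k+1) n))
    {k n : ℕ} (hkn : k ≤ n) : 0 < ξ k n := by
  induction hkn using Nat.decreasingInduction with
  | self => rw [hdiag]; exact div_pos (hβpos n) (hαpos n)
  | of_succ k hk ih => rw [hrec k n hk]; exact div_pos (hβpos k) (add_pos (hαpos k) ih)

theorem approx_sub_tail (hαpos : ∀ k, 0 < α k) (hβpos : ∀ k, 0 < β k)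
    (hdiag : ∀ n, ξ n n = β n / α n) (hrec : ∀ k n, k < n → ξ k n = β k / (α k + ξ (k+1) n))
    (hξtpos : ∀ k, 0 < ξt k) (hξtrec : ∀ k, ξt k = β k / (α k + ξt (k+1)))
    {k n : ℕ} (hkn : k < n) :
    ξ k n - ξt k = ξ k n * ξt k / β k * (ξt (k+1) - ξ (k+1) n) := by
  have hpos := approx_pos hαpos hβpos hdiag hrec hkn
  rw [hrec k n hkn, hξtrec k]
  exact div_add_sub_div_add (hβpos k).ne' (add_pos (hαpos k) hpos).ne'
    (add_pos (hαpos k) (hξtpos (k+1))).ne'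

theorem approx_alternates (hαpos : ∀ k, 0 < α k) (hβpos : ∀ k, 0 < β k)
    (hdiag : ∀ n, ξ n n = β n / α n) (hrec : ∀ k n, k < n → ξ k n = β k / (α k + ξ (k+1) n))
    (hξtpos : ∀ k, 0 < ξt k) (hξtrec : ∀ k, ξt k = β k / (α k + ξt (k+1)))
    {k n : ℕ} (hkn : k ≤ n) :
    (Even (n - k) → ξt k < ξ k n) ∧ (Odd (n - k) → ξ k n < ξt k) := by
  induction hkn using Nat.decreasingInduction with
  | self =>
    refine ⟨fun _ => ?_, fun h => absurd h (by simp)⟩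
    rw [hξtrec n, hdiag n]
    exact div_lt_div_of_pos_left (hβpos n) (hαpos n) (lt_add_of_pos_right _ (hξtpos (n+1)))
  | of_succ k hk ih =>
    have hρ : 0 < ξ k n * ξt k / β k :=
      div_pos (mul_pos (approx_pos hαpos hβpos hdiag hrec hk.le) (hξtpos k)) (hβpos k)
    have herr := approx_sub_tail hαpos hβpos hdiag hrec hξtpos hξtrec hk
    rw [show n - k = n - (k+1) + 1 by omega, Nat.even_add_one, Nat.odd_add_one,
      Nat.not_even_iff_odd, Nat.not_odd_iff_even]
    refine ⟨fun h => ?_, fun h => ?_⟩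
    · have := mul_pos hρ (sub_pos.2 (ih.2 h))
      linarith
    · have := mul_neg_of_pos_of_neg hρ (sub_neg.2 (ih.1 h))
      linarith

theorem approx_mul_approx_lt (hαpos : ∀ k, 0 < α k) (hβpos : ∀ k, 0 < β k)
    (hdiag : ∀ n, ξ n n = β n / α n) (hrec : ∀ k n, k < n → ξ k n = β k / (α k + ξ (k+1) n))
    (hξtrec : ∀ k, ξt k = β k / (α k + ξt (k+1))) {k n : ℕ} (hkn : k < n)
    (hlt : ξ (k+1) n < ξt (k+1)) : ξ k n * ξ (k+1) n < ξt k * ξt (k+1) := by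
  rw [hrec k n hkn, hξtrec k]
  exact div_add_mul_self_lt_div_add_mul_self (hαpos k) (hβpos k)
    (approx_pos hαpos hβpos hdiag hrec hkn).le hlt

theorem sub_tail_div_lt_of_even (hαpos : ∀ k, 0 < α k) (hβpos : ∀ k, 0 < β k)
    (hdiag : ∀ n, ξ n n = β n / α n) (hrec : ∀ k n, k < n → ξ k n = β k / (α k + ξ (k+1) n))
    (hξtpos : ∀ k, 0 < ξt k) (hξtrec : ∀ k, ξt k = β k / (α k + ξt (k+1)))
    {k n : ℕ} (hkn : k < n) (heven : Even (n - k + 1)) :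
    (ξ k n - ξt k) / (ξt (k+1) - ξ (k+1) n) < ξt k ^ 2 / β k := by
  have hodd : Odd (n - k) := by simpa [Nat.even_add_one] using heven
  have heven' : Even (n - (k+1)) := by
    rwa [show n - k = n - (k+1) + 1 by omega, Nat.odd_add_one, Nat.not_odd_iff_even] at hodd
  have hlt := (approx_alternates hαpos hβpos hdiag hrec hξtpos hξtrec hkn.le).2 hodd
  have hgt : ξt (k+1) < ξ (k+1) n :=
    (approx_alternates hαpos hβpos hdiag hrec hξtpos hξtrec hkn).1 heven'
  rw [approx_sub_tail hαpos hβpos hdiag hrec hξtpos hξtrec hkn,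
    mul_div_cancel_right₀ _ (sub_neg.2 hgt).ne, sq]
  gcongr
  · exact hβpos k
  · exact hξtpos k

theorem sub_tail_div_lt_of_odd (hαpos : ∀ k, 0 < α k) (hβpos : ∀ k, 0 < β k)
    (hdiag : ∀ n, ξ n n = β n / α n) (hrec : ∀ k n, k < n → ξ k n = β k / (α k + ξ (k+1) n))
    (hξtpos : ∀ k, 0 < ξt k) (hξtrec : ∀ k, ξt k = β k / (α k + ξt (k+1)))
    {k n : ℕ} (hkn : k < n) (hodd : Odd (n - k + 1)) :
    (ξ k n - ξt k) / (ξ (k+2) n - ξt (k+2)) <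
      ξt k ^ 2 / β k * (ξt (k+1) ^ 2 / β (k+1)) := by
  have heven : Even (n - k) := by simpa [Nat.odd_add_one] using hodd
  have hk1 : k + 1 < n := by
    obtain ⟨m, hm⟩ := heven
    omega
  have hodd' : Odd (n - (k+1)) := by
    rwa [show n - k = n - (k+1) + 1 by omega, Nat.even_add_one, Nat.not_even_iff_odd] at heven
  have heven'' : Even (n - (k+2)) := by
    rwa [show n - (k+1) = n - (k+2) + 1 by omega, Nat.odd_add_one, Nat.not_odd_iff_even] at hodd'
  have hlt : ξ (k+1) n < ξt (k+1) :=
    (approx_alternates hαpos hβpos hdiag hrec hξtpos hξtrec hk1.le).2 hodd'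
  have hgt : ξt (k+2) < ξ (k+2) n :=
    (approx_alternates hαpos hβpos hdiag hrec hξtpos hξtrec hk1).1 heven''
  have hprod := approx_mul_approx_lt hαpos hβpos hdiag hrec hξtrec hkn hlt
  have herr : ξ k n - ξt k = ξ k n * ξ (k+1) n * (ξt k * ξt (k+1)) / (β k * β (k+1)) *
      (ξ (k+2) n - ξt (k+2)) := by
    rw [approx_sub_tail hαpos hβpos hdiag hrec hξtpos hξtrec hkn,
      show ξt (k+1) - ξ (k+1) n = -(ξ (k+1) n - ξt (k+1)) by ring,
      approx_sub_tail hαpos hβpos hdiag hrec hξtpos hξtrec hk1]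
    field_simp
    ring
  have hβ2 := mul_pos (hβpos k) (hβpos (k+1))
  have hξt2 := mul_pos (hξtpos k) (hξtpos (k+1))
  rw [herr, mul_div_cancel_right₀ _ (sub_pos.2 hgt).ne',
    show ξt k ^ 2 / β k * (ξt (k+1) ^ 2 / β (k+1)) =
      ξt k * ξt (k+1) * (ξt k * ξt (k+1)) / (β k * β (k+1)) by field_simp]
  gcongr

theorem sq_lt_of_tendsto_tail {α' β' L : ℝ} (hα' : 0 < α')
    (hβ' : 0 < β') (hαlim : Tendsto α atTop (𝓝 α')) (hβlim : Tendsto β atTop (𝓝 β'))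
    (hξtpos : ∀ k, 0 < ξt k) (hξtrec : ∀ k, ξt k = β k / (α k + ξt (k+1)))
    (hL : Tendsto ξt atTop (𝓝 L)) : L ^ 2 < β' := by
  have hL0 : 0 ≤ L := ge_of_tendsto' hL fun k => (hξtpos k).le
  have hαL : 0 < α' + L := by linarith
  have hfix : L = β' / (α' + L) :=
    tendsto_nhds_unique hL <| (hβlim.div (hαlim.add (hL.comp (tendsto_add_atTop_nat 1)))
      hαL.ne').congr fun k => (hξtrec k).symm
  have hLpos : 0 < L := hfix ▸ div_pos hβ' hαL
  rw [eq_div_iff hαL.ne'] at hfix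
  nlinarith

end ContinuedFraction

theorem stmt9_general (α β : ℕ → ℝ) (hαpos : ∀ k, 0 < α k) (hβpos : ∀ k, 0 < β k)
    (α' β' : ℝ) (hα' : 0 < α') (hβ' : 0 < β')
    (hαlim : Tendsto α atTop (nhds α')) (hβlim : Tendsto β atTop (nhds β'))
    (ξ : ℕ → ℕ → ℝ)
    (hdiag : ∀ n, ξ n n = β n / α n)
    (hrec : ∀ k n, k < n → ξ k n = β k / (α k + ξ (k+1) n))
    (ξt : ℕ → ℝ) (hξtpos : ∀ k, 0 < ξt k)
    (hξtrec : ∀ k, ξt k = β k / (α k + ξt (k+1)))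
    (hfix : Tendsto ξt atTop (nhds (α' / 2 * (Real.sqrt (1 + 4 * β' / α' ^ 2) - 1)))) :
    ∃ r : ℝ, 0 < r ∧ r < 1 ∧ ∃ k₂ : ℕ, ∀ k n : ℕ, k₂ ≤ k → k < n →
      ((Even (n - k + 1) → (ξ k n - ξt k) / (ξt (k+1) - ξ (k+1) n) < r) ∧
       (Odd (n - k + 1) → (ξ k n - ξt k) / (ξ (k+2) n - ξt (k+2)) < r ^ 2)) := by
  have hL2 := sq_lt_of_tendsto_tail hα' hβ' hαlim hβlim hξtpos hξtrec hfix
  obtain ⟨r, hqr, hr1⟩ := exists_between ((div_lt_one hβ').2 hL2)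
  have hr0 : 0 < r := (div_nonneg (sq_nonneg _) hβ'.le).trans_lt hqr
  obtain ⟨k₂, hk₂⟩ :=
    eventually_atTop.1 (((hfix.pow 2).div hβlim hβ'.ne').eventually_lt_const hqr)
  refine ⟨r, hr0, hr1, k₂, fun k n hk hkn => ⟨fun heven => ?_, fun hodd => ?_⟩⟩
  · exact (sub_tail_div_lt_of_even hαpos hβpos hdiag hrec hξtpos hξtrec hkn heven).trans
      (hk₂ k hk)
  · refine (sub_tail_div_lt_of_odd hαpos hβpos hdiag hrec hξtpos hξtrec hkn hodd).trans ?_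
    calc _ < r * r := mul_lt_mul'' (hk₂ k hk) (hk₂ (k+1) (by omega))
          (div_nonneg (sq_nonneg _) (hβpos k).le) (div_nonneg (sq_nonneg _) (hβpos (k+1)).le)
      _ = r ^ 2 := (sq r).symm

/-- For positive sequences `β k → β > 0`, `α k → α > 0`, with approximants
`ξ k n` and positive tails `ξt k` (converging to the fixed point `ξ > 0`), there exist
`0 < r < 1` and `k₂` such that for all `n > k ≥ k₂`: if `n − k + 1` is even then
`(ξ k n − ξt k)/(ξt (k+1) − ξ (k+1) n) < r`, and if `n − k + 1` is odd then
`(ξ k n − ξt k)/(ξ (k+2) n − ξt (k+2)) < r²`. -/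
theorem stmt9 (α β : ℕ → ℝ) (hαpos : ∀ k, 0 < α k) (hβpos : ∀ k, 0 < β k)
    (α' β' : ℝ) (hα' : 0 < α') (hβ' : 0 < β')
    (hαlim : Tendsto α atTop (nhds α')) (hβlim : Tendsto β atTop (nhds β'))
    (ξ : ℕ → ℕ → ℝ)
    (hdiag : ∀ n, ξ n n = β n / α n)
    (hrec : ∀ k n, k < n → ξ k n = β k / (α k + ξ (k+1) n))
    (ξt : ℕ → ℝ) (hξtpos : ∀ k, 0 < ξt k)
    (hξtlim : ∀ k, Tendsto (fun n => ξ k n) atTop (nhds (ξt k)))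
    (hξtrec : ∀ k, ξt k = β k / (α k + ξt (k+1)))
    (hfix : Tendsto ξt atTop (nhds (α' / 2 * (Real.sqrt (1 + 4 * β' / α' ^ 2) - 1)))) :
    ∃ r : ℝ, 0 < r ∧ r < 1 ∧ ∃ k₂ : ℕ, ∀ k n : ℕ, k₂ ≤ k → k < n →
      ((Even (n - k + 1) → (ξ k n - ξt k) / (ξt (k+1) - ξ (k+1) n) < r) ∧
       (Odd (n - k + 1) → (ξ k n - ξt k) / (ξ (k+2) n - ξt (k+2)) < r ^ 2)) :=
  stmt9_general α β hαpos hβpos α' β' hα' hβ' hαlim hβlim ξ hdiag hrec ξt hξtpos hξtrec hfix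
end

section
/- Let 0 < r < 1, let ξ_k be a sequence with c⁻¹ < ξ_k < c for some c > 1, and suppose doubly-indexed positive reals ξ_{k,n} satisfy |ξ_k − ξ_{k,n}| ≤ C r^{n−k} for all n ≥ k ≥ k₀ (C a constant). Then for each fixed i, the products ∏_{j=1}^{n−i} (ξ_{k+j,k+n}/ξ_{k+j}) satisfy: limsup and liminf over n of the logarithm of the product differ by at most 2C' rⁱ for a constant C' independent of k and i, uniformly in k ≥ k₀. -/
/-!
The logarithm of the product is `∑ j, log (ξ (k+j) (k+n) / ξt (k+j))`. Since `c⁻¹ < ξt`, each ratio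
is within `c C r^(n-j)` of `1`, and `|log x| ≤ 2 |x - 1|` when `|x - 1| ≤ 1/2`; so once
`c C rⁱ ≤ 1/2` the geometric tail bounds the whole logarithm by `2 c C rⁱ / (1 - r)`, uniformly in
`n` and `k`. For the finitely many smaller `i` the gap between limsup and liminf does not depend on
`k ≥ k₀`: moving the base point from `k₀` to `k₀ + d` only removes `d` factors `ξ m n / ξt m` with
`m` fixed, and these tend to `1` as `n → ∞`. Enlarging `C'` to cover those finitely many gaps at
`k₀` finishes the proof.
-/

open Filter Finset

theorem Real.abs_log_le_two_mul_abs_sub_one {x : ℝ} (hx : |x - 1| ≤ 1 / 2) :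
    |Real.log x| ≤ 2 * |x - 1| := by
  have h := Real.abs_log_sub_add_sum_range_le (x := 1 - x) (by rw [abs_sub_comm]; linarith) 0
  rw [abs_sub_comm, sum_range_zero, zero_add, sub_sub_cancel, zero_add, pow_one] at h
  calc |Real.log x| ≤ |x - 1| / (1 - |x - 1|) := h
    _ ≤ |x - 1| / (1 / 2) := by gcongr; linarith
    _ = 2 * |x - 1| := by ring

theorem abs_div_sub_one_le {x y c ε : ℝ} (hc : 0 < c) (hy : c⁻¹ < y) (h : |y - x| ≤ ε) :
    |x / y - 1| ≤ c * ε := by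
  have hy0 : 0 < y := (inv_pos.mpr hc).trans hy
  have hinv : y⁻¹ < c := inv_lt_of_inv_lt₀ hc hy
  calc |x / y - 1| = |y - x| * y⁻¹ := by
        rw [← abs_of_pos (inv_pos.mpr hy0), ← abs_mul, abs_sub_comm]; field_simp
    _ ≤ ε * c := mul_le_mul h hinv.le (by positivity) ((abs_nonneg _).trans h)
    _ = c * ε := mul_comm _ _

theorem sum_Icc_pow_sub_le {r : ℝ} (hr0 : 0 ≤ r) (hr1 : r < 1) (i n : ℕ) :
    ∑ j ∈ Icc 1 (n - i), r ^ (n - j) ≤ r ^ i / (1 - r) := by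
  have hinj : Set.InjOn (n - ·) (Icc 1 (n - i) : Set ℕ) := by
    intro a ha b hb hab
    simp only [coe_Icc, Set.mem_Icc] at ha hb hab
    omega
  rw [← sum_image hinj]
  calc ∑ m ∈ (Icc 1 (n - i)).image (n - ·), r ^ m ≤ ∑ m ∈ Ico i n, r ^ m :=
        sum_le_sum_of_subset_of_nonneg (by intro m; simp only [mem_image, mem_Icc, mem_Ico]; omega)
          fun _ _ _ ↦ pow_nonneg hr0 _
    _ ≤ r ^ i / (1 - r) := geom_sum_Ico_le_of_lt_one hr0 hr1

theorem Finset.prod_Icc_one_add {M : Type*} [CommMonoid M] (f : ℕ → M) (a b : ℕ) :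
    ∏ j ∈ Icc 1 (a + b), f j = (∏ j ∈ Icc 1 a, f j) * ∏ j ∈ Icc 1 b, f (a + j) := by
  induction b with
  | zero => simp
  | succ b ih =>
    rw [← add_assoc, prod_Icc_succ_top (by omega), prod_Icc_succ_top (by omega), ih, mul_assoc,
      add_assoc]

/- No boundedness is assumed: when `f` is unbounded both sides are the junk value `0`. -/
theorem Real.limsup_add_of_tendsto_zero {ι : Type*} {l : Filter ι} [l.NeBot] {f h : ι → ℝ}
    (hh : Tendsto h l (nhds 0)) : limsup (h + f) l = limsup f l := by
  have hneg : Tendsto (-h) l (nhds 0) := neg_zero (G := ℝ) ▸ hh.neg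
  by_cases hf : l.IsBoundedUnder (· ≤ ·) f ∧ l.IsCoboundedUnder (· ≤ ·) f
  · have hhf : l.IsBoundedUnder (· ≤ ·) (h + f) ∧ l.IsCoboundedUnder (· ≤ ·) (h + f) :=
      ⟨isBoundedUnder_le_add hh.isBoundedUnder_le hf.1,
        isCoboundedUnder_le_add hh.isBoundedUnder_ge hf.2⟩
    apply le_antisymm
    · calc limsup (h + f) l ≤ limsup h l + limsup f l :=
            limsup_add_le hh.isBoundedUnder_ge hh.isBoundedUnder_le hf.2 hf.1
        _ = limsup f l := by rw [hh.limsup_eq, zero_add]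
    · calc limsup f l = limsup (-h + (h + f)) l := by rw [neg_add_cancel_left]
        _ ≤ limsup (-h) l + limsup (h + f) l :=
            limsup_add_le hneg.isBoundedUnder_ge hneg.isBoundedUnder_le hhf.2 hhf.1
        _ = limsup (h + f) l := by rw [hneg.limsup_eq, zero_add]
  · have hhf : ¬ (l.IsBoundedUnder (· ≤ ·) (h + f) ∧ l.IsCoboundedUnder (· ≤ ·) (h + f)) := by
      refine fun hhf ↦ hf ?_
      rw [← neg_add_cancel_left h f]
      exact ⟨isBoundedUnder_le_add hneg.isBoundedUnder_le hhf.1,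
        isCoboundedUnder_le_add hneg.isBoundedUnder_ge hhf.2⟩
    rcases not_and_or.mp hf with hf | hf <;> rcases not_and_or.mp hhf with hhf | hhf <;>
      simp [Real.limsup_of_not_isBoundedUnder, Real.limsup_of_not_isCoboundedUnder, hf, hhf]

theorem Real.liminf_add_of_tendsto_zero {ι : Type*} {l : Filter ι} [l.NeBot] {f h : ι → ℝ}
    (hh : Tendsto h l (nhds 0)) : liminf (h + f) l = liminf f l := by
  have hneg : Tendsto (-h) l (nhds 0) := neg_zero (G := ℝ) ▸ hh.neg
  by_cases hf : l.IsBoundedUnder (· ≥ ·) f ∧ l.IsCoboundedUnder (· ≥ ·) f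
  · have hhf : l.IsBoundedUnder (· ≥ ·) (h + f) ∧ l.IsCoboundedUnder (· ≥ ·) (h + f) :=
      ⟨isBoundedUnder_ge_add hh.isBoundedUnder_ge hf.1,
        isCoboundedUnder_ge_add hh.isBoundedUnder_le hf.2⟩
    apply le_antisymm
    · calc liminf (h + f) l = liminf (-h) l + liminf (h + f) l := by rw [hneg.liminf_eq, zero_add]
        _ ≤ liminf (-h + (h + f)) l :=
            le_liminf_add hneg.isBoundedUnder_ge hneg.isBoundedUnder_le hhf.1 hhf.2
        _ = liminf f l := by rw [neg_add_cancel_left]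
    · calc liminf f l = liminf h l + liminf f l := by rw [hh.liminf_eq, zero_add]
        _ ≤ liminf (h + f) l :=
            le_liminf_add hh.isBoundedUnder_ge hh.isBoundedUnder_le hf.1 hf.2
  · have hhf : ¬ (l.IsBoundedUnder (· ≥ ·) (h + f) ∧ l.IsCoboundedUnder (· ≥ ·) (h + f)) := by
      refine fun hhf ↦ hf ?_
      rw [← neg_add_cancel_left h f]
      exact ⟨isBoundedUnder_ge_add hneg.isBoundedUnder_ge hhf.1,
        isCoboundedUnder_ge_add hneg.isBoundedUnder_le hhf.2⟩
    rcases not_and_or.mp hf with hf | hf <;> rcases not_and_or.mp hhf with hhf | hhf <;>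
      simp [Real.liminf_of_not_isBoundedUnder, Real.liminf_of_not_isCoboundedUnder, hf, hhf]

theorem limsup_sub_liminf_le_of_abs_le {f : ℕ → ℝ} {B : ℝ} (hf : ∀ n, |f n| ≤ B) :
    limsup f atTop - liminf f atTop ≤ 2 * B := by
  have hle : ∀ n, f n ≤ B := fun n ↦ (le_abs_self _).trans (hf n)
  have hge : ∀ n, -B ≤ f n := fun n ↦ neg_le_of_abs_le (hf n)
  have hsup : limsup f atTop ≤ B :=
    limsup_le_of_le (isBoundedUnder_of ⟨-B, hge⟩).isCoboundedUnder_le (Eventually.of_forall hle)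
  have hinf : -B ≤ liminf f atTop :=
    le_liminf_of_le (isBoundedUnder_of ⟨B, hle⟩).isCoboundedUnder_ge (Eventually.of_forall hge)
  linarith

noncomputable def logProd (ξt : ℕ → ℝ) (ξ : ℕ → ℕ → ℝ) (k i n : ℕ) : ℝ :=
  Real.log (∏ j ∈ Icc 1 (n - i), ξ (k + j) (k + n) / ξt (k + j))

section LogProd

variable {r c C : ℝ} {k₀ : ℕ} {ξt : ℕ → ℝ} {ξ : ℕ → ℕ → ℝ}

theorem tendsto_of_abs_sub_le_pow (hr0 : 0 ≤ r) (hr1 : r < 1)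
    (hclose : ∀ k n : ℕ, k₀ ≤ k → k ≤ n → |ξt k - ξ k n| ≤ C * r ^ (n - k))
    {m : ℕ} (hm : k₀ ≤ m) : Tendsto (ξ m) atTop (nhds (ξt m)) := by
  have hpow : Tendsto (fun n ↦ C * r ^ (n - m)) atTop (nhds 0) := by
    simpa using ((tendsto_pow_atTop_nhds_zero_of_lt_one hr0 hr1).comp
      (tendsto_sub_atTop_nat m)).const_mul C
  refine tendsto_iff_norm_sub_tendsto_zero.mpr (squeeze_zero_norm' ?_ hpow)
  filter_upwards [eventually_ge_atTop m] with n hn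
  rw [norm_norm, Real.norm_eq_abs, abs_sub_comm]
  exact hclose m n hm hn

theorem abs_log_div_le (hc : 0 < c) (hξt : ∀ k, c⁻¹ < ξt k)
    (hclose : ∀ k n : ℕ, k₀ ≤ k → k ≤ n → |ξt k - ξ k n| ≤ C * r ^ (n - k))
    {m n : ℕ} (hm : k₀ ≤ m) (hmn : m ≤ n) (hsmall : c * (C * r ^ (n - m)) ≤ 1 / 2) :
    |Real.log (ξ m n / ξt m)| ≤ 2 * (c * (C * r ^ (n - m))) := by
  have h := abs_div_sub_one_le hc (hξt m) (hclose m n hm hmn)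
  exact (Real.abs_log_le_two_mul_abs_sub_one (h.trans hsmall)).trans (by linarith)

theorem abs_logProd_le (hr0 : 0 ≤ r) (hr1 : r < 1) (hc : 0 < c) (hC : 0 ≤ C)
    (hξt : ∀ k, c⁻¹ < ξt k) (hξpos : ∀ k n, 0 < ξ k n)
    (hclose : ∀ k n : ℕ, k₀ ≤ k → k ≤ n → |ξt k - ξ k n| ≤ C * r ^ (n - k))
    {k i : ℕ} (hk : k₀ ≤ k) (hi : c * (C * r ^ i) ≤ 1 / 2) (n : ℕ) :
    |logProd ξt ξ k i n| ≤ 2 * (c * C) / (1 - r) * r ^ i := by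
  have hξt0 : ∀ m, 0 < ξt m := fun m ↦ (inv_pos.mpr hc).trans (hξt m)
  rw [logProd, Real.log_prod fun j _ ↦ (div_pos (hξpos _ _) (hξt0 _)).ne']
  have hterm : ∀ j ∈ Icc 1 (n - i),
      |Real.log (ξ (k + j) (k + n) / ξt (k + j))| ≤ 2 * (c * C) * r ^ (n - j) := by
    intro j hj
    rw [mem_Icc] at hj
    have hexp : k + n - (k + j) = n - j := by omega
    have hsmall : c * (C * r ^ (n - j)) ≤ 1 / 2 :=
      le_trans (mul_le_mul_of_nonneg_left (mul_le_mul_of_nonneg_left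
        (pow_le_pow_of_le_one hr0 hr1.le (by omega)) hC) hc.le) hi
    have hbound := abs_log_div_le hc hξt hclose (by omega : k₀ ≤ k + j) (by omega : k + j ≤ k + n)
    rw [hexp] at hbound
    linarith [hbound hsmall]
  calc |∑ j ∈ Icc 1 (n - i), Real.log (ξ (k + j) (k + n) / ξt (k + j))|
      ≤ ∑ j ∈ Icc 1 (n - i), 2 * (c * C) * r ^ (n - j) :=
        (abs_sum_le_sum_abs _ _).trans (sum_le_sum hterm)
    _ ≤ 2 * (c * C) * (r ^ i / (1 - r)) := by
        rw [← mul_sum]; gcongr; exact sum_Icc_pow_sub_le hr0 hr1 i n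
    _ = 2 * (c * C) / (1 - r) * r ^ i := by ring

theorem logProd_add (hξt : ∀ m, 0 < ξt m) (hξpos : ∀ k n, 0 < ξ k n) {k i n : ℕ} (d : ℕ)
    (hn : i ≤ n) :
    logProd ξt ξ k i (n + d) =
      Real.log (∏ j ∈ Icc 1 d, ξ (k + j) (k + d + n) / ξt (k + j)) +
        logProd ξt ξ (k + d) i n := by
  have hpos : ∀ m l, 0 < ξ m l / ξt m := fun m l ↦ div_pos (hξpos _ _) (hξt _)
  rw [logProd, logProd, show n + d - i = d + (n - i) by omega, prod_Icc_one_add,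
    Real.log_mul (prod_pos fun _ _ ↦ hpos _ _).ne' (prod_pos fun _ _ ↦ hpos _ _).ne']
  simp only [add_assoc, add_comm n d]

theorem limsup_sub_liminf_logProd_eq (hr0 : 0 ≤ r) (hr1 : r < 1) (hξt : ∀ m, 0 < ξt m)
    (hξpos : ∀ k n, 0 < ξ k n)
    (hclose : ∀ k n : ℕ, k₀ ≤ k → k ≤ n → |ξt k - ξ k n| ≤ C * r ^ (n - k))
    {k : ℕ} (hk : k₀ ≤ k) (i : ℕ) :
    limsup (logProd ξt ξ k i) atTop - liminf (logProd ξt ξ k i) atTop =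
      limsup (logProd ξt ξ k₀ i) atTop - liminf (logProd ξt ξ k₀ i) atTop := by
  obtain ⟨d, rfl⟩ := Nat.exists_eq_add_of_le hk
  set h : ℕ → ℝ := fun n ↦ Real.log (∏ j ∈ Icc 1 d, ξ (k₀ + j) (k₀ + d + n) / ξt (k₀ + j))
  have hfactor : ∀ j ∈ Icc 1 d,
      Tendsto (fun n ↦ ξ (k₀ + j) (k₀ + d + n) / ξt (k₀ + j)) atTop (nhds 1) := by
    intro j _
    have hlim := tendsto_of_abs_sub_le_pow hr0 hr1 hclose (Nat.le_add_right k₀ j)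
    have hshifted := hlim.comp (tendsto_atTop_mono (fun n ↦ Nat.le_add_left n (k₀ + d)) tendsto_id)
    simpa [(hξt _).ne'] using hshifted.div_const (ξt (k₀ + j))
  have hprod : Tendsto (fun n ↦ ∏ j ∈ Icc 1 d, ξ (k₀ + j) (k₀ + d + n) / ξt (k₀ + j)) atTop
      (nhds 1) := by
    simpa only [prod_const_one] using tendsto_finsetProd (Icc 1 d) hfactor
  have hh : Tendsto h atTop (nhds 0) := by
    rw [← Real.log_one]
    exact (Real.continuousAt_log one_ne_zero).tendsto.comp hprod
  have hshift : (fun n ↦ logProd ξt ξ k₀ i (n + d)) =ᶠ[atTop] h + logProd ξt ξ (k₀ + d) i := by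
    filter_upwards [eventually_ge_atTop i] with n hn
    exact logProd_add hξt hξpos d hn
  rw [← limsup_nat_add (logProd ξt ξ k₀ i) d, ← liminf_nat_add (logProd ξt ξ k₀ i) d,
    limsup_congr hshift, liminf_congr hshift, Real.limsup_add_of_tendsto_zero hh,
    Real.liminf_add_of_tendsto_zero hh]

end LogProd

/-- If `0 < r < 1`, `c⁻¹ < ξt k < c`, all `ξ k n > 0`, and
`|ξt k − ξ k n| ≤ C r^(n−k)` for `n ≥ k ≥ k₀`, then for each fixed `i` the logs of the
products `∏_{j=1}^{n−i} ξ (k+j) (k+n) / ξt (k+j)` have limsup and liminf (over `n`)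
differing by at most `2 C' rⁱ`, with `C'` independent of `k` and `i`, uniformly in
`k ≥ k₀`. -/
theorem stmt17 (r c C : ℝ) (hr0 : 0 < r) (hr1 : r < 1) (hc : 1 < c) (hC : 0 < C)
    (k₀ : ℕ)
    (ξt : ℕ → ℝ) (hξt : ∀ k, c⁻¹ < ξt k ∧ ξt k < c)
    (ξ : ℕ → ℕ → ℝ) (hξpos : ∀ k n, 0 < ξ k n)
    (hclose : ∀ k n : ℕ, k₀ ≤ k → k ≤ n → |ξt k - ξ k n| ≤ C * r ^ (n - k)) :
    ∃ C' : ℝ, 0 < C' ∧ ∀ i : ℕ, ∀ k : ℕ, k₀ ≤ k →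
      Filter.limsup (fun n : ℕ =>
          Real.log (∏ j ∈ Finset.Icc 1 (n - i), ξ (k+j) (k+n) / ξt (k+j))) atTop -
        Filter.liminf (fun n : ℕ =>
          Real.log (∏ j ∈ Finset.Icc 1 (n - i), ξ (k+j) (k+n) / ξt (k+j))) atTop ≤
        2 * C' * r ^ i := by
  have hc0 : 0 < c := one_pos.trans hc
  have hξt' : ∀ k, c⁻¹ < ξt k := fun k ↦ (hξt k).1
  have hξt0 : ∀ k, 0 < ξt k := fun k ↦ (inv_pos.mpr hc0).trans (hξt' k)
  set K := 2 * (c * C) / (1 - r)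
  set gap := fun i ↦ limsup (logProd ξt ξ k₀ i) atTop - liminf (logProd ξt ξ k₀ i) atTop
  obtain ⟨M, hM⟩ := exists_pow_lt_of_lt_one (by positivity : 0 < 1 / 2 / (c * C)) hr1
  obtain ⟨A, hA⟩ := ((Set.finite_lt_nat M).image fun i ↦ gap i / (2 * r ^ i)).bddAbove
  refine ⟨max K A, lt_max_of_lt_left (div_pos (by positivity) (by linarith)),
    fun i k hk ↦ ?_⟩
  show limsup (logProd ξt ξ k i) atTop - liminf (logProd ξt ξ k i) atTop ≤ _
  rcases lt_or_ge i M with hi | hi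
  · rw [limsup_sub_liminf_logProd_eq hr0.le hr1 hξt0 hξpos hclose hk i]
    have hgap := hA (Set.mem_image_of_mem _ hi)
    rw [div_le_iff₀ (by positivity)] at hgap
    nlinarith [le_max_right K A, pow_pos hr0 i]
  · have hsmall : c * (C * r ^ i) ≤ 1 / 2 := by
      have hpow := (pow_le_pow_of_le_one hr0.le hr1.le hi).trans hM.le
      rw [le_div_iff₀ (by positivity)] at hpow
      linarith
    calc _ ≤ 2 * (K * r ^ i) := limsup_sub_liminf_le_of_abs_le
          (abs_logProd_le hr0.le hr1 hc0 hC.le hξt' hξpos hclose hk hsmall)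
      _ ≤ 2 * max K A * r ^ i := by nlinarith [le_max_left K A, pow_pos hr0 i]
end
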